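/- arXiv:1705.07276 — 2 statements merged into one kernel-verified Lean document; each statement's English description precedes it below -/
import Mathlib

section
/- Let H be a pencilled hfd line set in PG(5,K) and let L[v,κ] be a pencil entirely contained in H (v a point, κ a plane, v ≤ κ). Then L[v,κ] = { X ∈ H : v ≤ X }, i.e. every line of H passing through v lies in the pencil L[v,κ]. -/
/-- The Klein quadratic form on `K^6`. -/
def kleinQ {K : Type*} [Field K] (x : Fin 6 → K) : K :=
  x 0 * x 1 + x 2 * x 3 + x 4 * x 5

/-- The polar bilinear form `B(x,y) = Q(x+y) - Q(x) - Q(y)`. -/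
def kleinB {K : Type*} [Field K] (x y : Fin 6 → K) : K :=
  kleinQ (x + y) - kleinQ x - kleinQ y

/-- The polar subspace `π₅(S)` of a subspace `S`. -/
def kleinPolar {K : Type*} [Field K] (S : Submodule K (Fin 6 → K)) :
    Submodule K (Fin 6 → K) where
  carrier := {y | ∀ s ∈ S, kleinB s y = 0}
  add_mem' := by
    intro a b ha hb s hs
    have h1 := ha s hs
    have h2 := hb s hs
    simp only [kleinB, kleinQ, Pi.add_apply] at *
    linear_combination h1 + h2
  zero_mem' := by
    intro s hs
    simp [kleinB, kleinQ]
  smul_mem' := by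
    intro c a ha s hs
    have h1 := ha s hs
    simp only [kleinB, kleinQ, Pi.add_apply, Pi.smul_apply, smul_eq_mul] at *
    linear_combination c * h1

/-- `τ` is a tangent hyperplane of the Klein quadric. -/
def IsTangentHyperplane {K : Type*} [Field K] (τ : Submodule K (Fin 6 → K)) : Prop :=
  ∃ x : Fin 6 → K, x ≠ 0 ∧ kleinQ x = 0 ∧ τ = kleinPolar (Submodule.span K {x})

/-- A subspace is external to the Klein quadric. -/
def IsExternal {K : Type*} [Field K] (S : Submodule K (Fin 6 → K)) : Prop :=
  ∀ s ∈ S, s ≠ 0 → kleinQ s ≠ 0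

/-- A `0`-secant of the Klein quadric: an external line. -/
def IsSecant {K : Type*} [Field K] (G : Submodule K (Fin 6 → K)) : Prop :=
  Module.finrank K G = 2 ∧ IsExternal G

/-- The pencil of lines with vertex `v` and carrier plane `κ`. -/
def pencil {K : Type*} [Field K] (v κ : Submodule K (Fin 6 → K)) :
    Set (Submodule K (Fin 6 → K)) :=
  {X | Module.finrank K X = 2 ∧ v ≤ X ∧ X ≤ κ}

/-- An hfd line set: a set of `0`-secants such that every tangent hyperplane
contains exactly one member. -/
def IsHfd {K : Type*} [Field K] (H : Set (Submodule K (Fin 6 → K))) : Prop :=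
  (∀ G ∈ H, IsSecant G) ∧
    ∀ τ : Submodule K (Fin 6 → K), IsTangentHyperplane τ → ∃! G, G ∈ H ∧ G ≤ τ

/-- A pencilled hfd line set: every member lies in a pencil entirely contained in `H`. -/
def IsPencilledHfd {K : Type*} [Field K] (H : Set (Submodule K (Fin 6 → K))) : Prop :=
  IsHfd H ∧
    ∀ G ∈ H, ∃ v κ : Submodule K (Fin 6 → K), Module.finrank K v = 1 ∧
      Module.finrank K κ = 3 ∧ v ≤ κ ∧ pencil v κ ⊆ H ∧ G ∈ pencil v κ

/-- `v` is a vertex of the pencilled hfd line set `H`. -/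
def IsVertex {K : Type*} [Field K] (H : Set (Submodule K (Fin 6 → K)))
    (v : Submodule K (Fin 6 → K)) : Prop :=
  Module.finrank K v = 1 ∧ ∃ κ : Submodule K (Fin 6 → K),
    Module.finrank K κ = 3 ∧ v ≤ κ ∧ pencil v κ ⊆ H

/-- `κ` is a carrier plane of the pencilled hfd line set `H`. -/
def IsCarrier {K : Type*} [Field K] (H : Set (Submodule K (Fin 6 → K)))
    (κ : Submodule K (Fin 6 → K)) : Prop :=
  Module.finrank K κ = 3 ∧ ∃ v : Submodule K (Fin 6 → K),
    Module.finrank K v = 1 ∧ v ≤ κ ∧ pencil v κ ⊆ H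

/-!
A line `X ∈ H` through `v` is a `0`-secant, so its polar solid `π₅(X)` has dimension `4`; as the
Klein quadric contains planes (e.g. `x₁ = x₃ = x₅ = 0`), that solid contains a singular point `p`,
and `τ = π₅(p)` is a tangent hyperplane containing `X`. Being a hyperplane, `τ` meets `κ` in at
least a line through `v`, i.e. `τ` contains a line `Y` of the pencil `L[v,κ] ⊆ H`. Since `τ`
contains exactly one member of `H`, `X = Y ≤ κ`.
-/

section Klein

variable {K : Type*} [Field K]

lemma kleinB_comm (x y : Fin 6 → K) : kleinB x y = kleinB y x := by
  simp only [kleinB, kleinQ, Pi.add_apply]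
  ring

def kleinBilinForm : LinearMap.BilinForm K (Fin 6 → K) :=
  LinearMap.mk₂ K kleinB
    (by intro x x' y; simp only [kleinB, kleinQ, Pi.add_apply]; ring)
    (by intro c x y; simp only [kleinB, kleinQ, Pi.add_apply, Pi.smul_apply, smul_eq_mul]; ring)
    (by intro x y y'; simp only [kleinB, kleinQ, Pi.add_apply]; ring)
    (by intro c x y; simp only [kleinB, kleinQ, Pi.add_apply, Pi.smul_apply, smul_eq_mul]; ring)

lemma kleinPolar_eq_orthogonal (S : Submodule K (Fin 6 → K)) :
    kleinPolar S = kleinBilinForm.orthogonal S :=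
  rfl

lemma six_le_finrank_add_finrank_kleinPolar (S : Submodule K (Fin 6 → K)) :
    6 ≤ Module.finrank K S + Module.finrank K (kleinPolar S) := by
  rw [kleinPolar_eq_orthogonal, LinearMap.BilinForm.finrank_add_finrank_orthogonal',
    Module.finrank_fin_fun]
  exact Nat.le_add_right _ _

lemma le_kleinPolar_comm {S T : Submodule K (Fin 6 → K)} :
    S ≤ kleinPolar T ↔ T ≤ kleinPolar S :=
  ⟨fun h t ht s hs => kleinB_comm s t ▸ h hs t ht, fun h s hs t ht => kleinB_comm t s ▸ h ht s hs⟩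

lemma exists_kleinQ_eq_zero_of_four_le_finrank {S : Submodule K (Fin 6 → K)}
    (hS : 4 ≤ Module.finrank K S) : ∃ p ∈ S, p ≠ 0 ∧ kleinQ p = 0 := by
  let oddCoords := LinearMap.funLeft K K ![(1 : Fin 6), 3, 5] ∘ₗ S.subtype
  have hker : LinearMap.ker oddCoords ≠ ⊥ :=
    LinearMap.ker_ne_bot_of_finrank_lt (by rw [Module.finrank_fin_fun]; omega)
  obtain ⟨⟨p, hpS⟩, hp, hp0⟩ := Submodule.exists_mem_ne_zero_of_ne_bot hker
  have h1 : p 1 = 0 := congrFun hp 0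
  have h3 : p 3 = 0 := congrFun hp 1
  have h5 : p 5 = 0 := congrFun hp 2
  refine ⟨p, hpS, fun h => hp0 (Subtype.ext h), ?_⟩
  simp only [kleinQ, h1, h3, h5, mul_zero, add_zero]

lemma exists_isTangentHyperplane_ge {S : Submodule K (Fin 6 → K)}
    (hS : Module.finrank K S ≤ 2) : ∃ τ, IsTangentHyperplane τ ∧ S ≤ τ := by
  obtain ⟨p, hpS, hp0, hQp⟩ := exists_kleinQ_eq_zero_of_four_le_finrank (S := kleinPolar S)
    (by have := six_le_finrank_add_finrank_kleinPolar S; omega)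
  exact ⟨_, ⟨p, hp0, hQp, rfl⟩,
    le_kleinPolar_comm.mpr ((Submodule.span_singleton_le_iff_mem p _).mpr hpS)⟩

lemma IsTangentHyperplane.five_le_finrank {τ : Submodule K (Fin 6 → K)}
    (hτ : IsTangentHyperplane τ) : 5 ≤ Module.finrank K τ := by
  obtain ⟨p, hp0, -, rfl⟩ := hτ
  have := six_le_finrank_add_finrank_kleinPolar (Submodule.span K {p})
  rw [finrank_span_singleton hp0] at this
  omega

end Klein

lemma exists_mem_pencil_le {K : Type*} [Field K] {v κ τ : Submodule K (Fin 6 → K)}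
    (hv : Module.finrank K v = 1) (hκ : Module.finrank K κ = 3) (hτ : 5 ≤ Module.finrank K τ)
    (hvκ : v ≤ κ) (hvτ : v ≤ τ) : ∃ Y ∈ pencil v κ, Y ≤ τ := by
  have hκτ : 2 ≤ Module.finrank K ↥(κ ⊓ τ) := by
    have := Submodule.finrank_sup_add_finrank_inf_eq κ τ
    have := (κ ⊔ τ).finrank_le
    rw [Module.finrank_fin_fun] at this
    omega
  obtain ⟨w, hw, hwv⟩ := SetLike.not_le_iff_exists.mp fun h : κ ⊓ τ ≤ v => by
    have := Submodule.finrank_mono h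
    omega
  have hY : v ⊔ Submodule.span K {w} ≤ κ ⊓ τ :=
    sup_le (le_inf hvκ hvτ) ((Submodule.span_singleton_le_iff_mem w _).mpr hw)
  refine ⟨v ⊔ Submodule.span K {w}, ⟨?_, le_sup_left, hY.trans inf_le_left⟩, hY.trans inf_le_right⟩
  rw [Submodule.finrank_sup_span_singleton hwv, hv]

/-- Lemma 4.7.
If a pencil `L[v,κ]` is entirely contained in a pencilled hfd line set `H`, then it
consists exactly of the lines of `H` through `v`. -/
theorem pencil_eq_lines_through_vertex {K : Type*} [Field K]
    (H : Set (Submodule K (Fin 6 → K))) (hH : IsPencilledHfd H)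
    (v κ : Submodule K (Fin 6 → K))
    (hv : Module.finrank K v = 1) (hκ : Module.finrank K κ = 3)
    (hvκ : v ≤ κ) (hpen : pencil v κ ⊆ H) :
    pencil v κ = {X | X ∈ H ∧ v ≤ X} := by
  ext X
  refine ⟨fun hX => ⟨hpen hX, hX.2.1⟩, fun ⟨hXH, hvX⟩ => ?_⟩
  obtain ⟨τ, hτ, hXτ⟩ := exists_isTangentHyperplane_ge (hH.1.1 X hXH).1.le
  obtain ⟨Y, hY, hYτ⟩ := exists_mem_pencil_le hv hκ hτ.five_le_finrank hvκ (hvX.trans hXτ)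
  obtain rfl : X = Y := (hH.1.2 τ hτ).unique ⟨hXH, hXτ⟩ ⟨hpen hY, hYτ⟩
  exact hY
end

section
/- Let ε₁ be a plane of PG(5,K) (3-dimensional subspace of V) that is external to the Klein quadric H₅. Then there exists a plane ε₂, also external to H₅, such that ε₁ ∩ ε₂ is a line, i.e. dim(ε₁ ∩ ε₂) = 2 and ε₁ ≠ ε₂. -/
/-!
Over the field with two elements there is no external plane at all: `Q` would take the value 1 at
all seven nonzero vectors of the plane, against the identity
`Q(a+b+c) + Q(a) + Q(b) + Q(c) = Q(a+b) + Q(b+c) + Q(c+a)`.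

Otherwise there is an anisotropic vector `u` lying neither in `ε₁` nor in its polar `ε₁^⊥`: a line
meeting a union of two subspaces in three points lies in one of them, and the lines through
`e₀ + e₁` in the isotropic directions `e₂, …, e₅` consist of anisotropic vectors but are not
contained in the external plane `ε₁`; if they all lay in `ε₁^⊥`, then `ε₁ ⊆ ⟨e₀ - e₁⟩`.
The reflection in `u` is an isometry, so `ε₂ := σᵤ(ε₁)` is external. As `u ∉ ε₁`, the vectors of
`ε₁` that `σᵤ` keeps in `ε₁` are exactly those it fixes, so `ε₁ ∩ ε₂ = ε₁ ∩ u^⊥`, which is a line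
because `u ∉ ε₁^⊥`.
-/

open Module (finrank Dual)
open QuadraticMap

namespace Submodule

variable {K V : Type*} [Field K] [AddCommGroup V] [Module K V]

lemma finrank_inf_ker_add_one {W : Submodule K V} [FiniteDimensional K W] {f : Dual K V} {w : V}
    (hw : w ∈ W) (hfw : f w ≠ 0) :
    finrank K (W ⊓ LinearMap.ker f : Submodule K V) + 1 = finrank K W := by
  have hf : f ∘ₗ W.subtype ≠ 0 := fun h => hfw (by simpa using congr($h ⟨w, hw⟩))
  rw [← Dual.finrank_ker_add_one_of_ne_zero hf, LinearMap.ker_comp, ← finrank_map_subtype_eq,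
    map_comap_subtype]

variable {S T : Submodule K V} {v d : V}

lemma mem_and_mem_of_add_smul_mem {t s : K} (hts : t ≠ s) (ht : v + t • d ∈ S)
    (hs : v + s • d ∈ S) : v ∈ S ∧ d ∈ S := by
  have hd : d ∈ S := by
    have : (t - s) • d ∈ S := by simpa [sub_smul] using S.sub_mem ht hs
    exact (S.smul_mem_iff (sub_ne_zero.mpr hts)).mp this
  exact ⟨by simpa using S.sub_mem ht (S.smul_mem t hd), hd⟩

lemma mem_and_mem_of_add_smul_mem_or_mem {c : K} (hc0 : c ≠ 0) (hc1 : c ≠ 1)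
    (h : ∀ t : K, v + t • d ∈ S ∨ v + t • d ∈ T) :
    (v ∈ S ∧ d ∈ S) ∨ (v ∈ T ∧ d ∈ T) := by
  rcases h 0 with h0 | h0 <;> rcases h 1 with h1 | h1
  · exact .inl (S.mem_and_mem_of_add_smul_mem zero_ne_one h0 h1)
  · rcases h c with hc | hc
    · exact .inl (S.mem_and_mem_of_add_smul_mem hc0.symm h0 hc)
    · exact .inr (T.mem_and_mem_of_add_smul_mem hc1.symm h1 hc)
  · rcases h c with hc | hc
    · exact .inl (S.mem_and_mem_of_add_smul_mem hc1.symm h1 hc)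
    · exact .inr (T.mem_and_mem_of_add_smul_mem hc0.symm h0 hc)
  · exact .inr (T.mem_and_mem_of_add_smul_mem zero_ne_one h0 h1)

end Submodule

namespace QuadraticMap

variable {K V : Type*} [Field K] [AddCommGroup V] [Module K V]

theorem not_anisotropic_of_finrank_eq_three (hK : ∀ t : K, t ≠ 0 → t = 1)
    (Q : QuadraticForm K V) (hV : finrank K V = 3) : ¬ Q.Anisotropic := by
  intro hQ
  have : FiniteDimensional K V := Module.finite_of_finrank_eq_succ hV
  let b := Module.finBasisOfFinrankEq K V hV
  have hone : ∀ x i, b.repr x i = 1 → Q x = 1 := by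
    intro x i hx
    refine hK _ (mt (hQ x) ?_)
    rintro rfl
    simp at hx
  have key := Q.map_add_add_add_map (b 0) (b 1) (b 2)
  rw [hone _ 0 (by simp), hone _ 0 (by simp), hone _ 1 (by simp), hone _ 2 (by simp),
    hone _ 0 (by simp), hone _ 1 (by simp), hone _ 0 (by simp)] at key
  exact one_ne_zero (by linear_combination key)

variable {Q : QuadraticForm K V} {u : V}

lemma inv_smul_polarBilin_apply_self (hu : Q u ≠ 0) : ((Q u)⁻¹ • polarBilin Q u) u = 2 := by
  simp only [LinearMap.smul_apply, polarBilin_apply_apply, polar_self, nsmul_eq_mul, Nat.cast_ofNat,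
    smul_eq_mul]
  field_simp

noncomputable def reflection (hu : Q u ≠ 0) : V ≃ₗ[K] V :=
  Module.reflection (inv_smul_polarBilin_apply_self hu)

lemma reflection_apply (hu : Q u ≠ 0) (y : V) :
    reflection hu y = y - ((Q u)⁻¹ * polar Q u y) • u :=
  Module.reflection_apply _ _

lemma reflection_apply_of_polar_eq_zero (hu : Q u ≠ 0) {y : V} (hy : polar Q u y = 0) :
    reflection hu y = y := by
  simp [reflection_apply, hy]

lemma map_reflection (hu : Q u ≠ 0) (y : V) : Q (reflection hu y) = Q y := by
  rw [reflection_apply, sub_eq_add_neg, ← neg_smul, QuadraticMap.map_add Q, QuadraticMap.map_smul,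
    polar_smul_right, polar_comm]
  simp only [smul_eq_mul]
  field_simp
  ring

variable {W : Submodule K V}

lemma anisotropic_restrict_map_reflection (hu : Q u ≠ 0) (hW : (Q.restrict W).Anisotropic) :
    (Q.restrict (W.map (reflection hu).toLinearMap)).Anisotropic := by
  rintro ⟨_, y, hy, rfl⟩ h
  have : (⟨y, hy⟩ : W) = 0 := hW _ (by simpa [map_reflection] using h)
  simp_all

lemma inf_map_reflection (hu : Q u ≠ 0) (huW : u ∉ W) :
    W ⊓ W.map (reflection hu).toLinearMap = W ⊓ LinearMap.ker (polarBilin Q u) := by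
  ext x
  refine ⟨?_, ?_⟩
  · rintro ⟨hx, y, hy, rfl⟩
    have : ((Q u)⁻¹ * polar Q u y) • u ∈ W := by
      simpa [reflection_apply] using W.sub_mem hy hx
    have hc : (Q u)⁻¹ * polar Q u y = 0 := by
      by_contra hc
      exact huW ((W.smul_mem_iff hc).mp this)
    have hyu : polar Q u y = 0 := by simpa [hu] using hc
    rw [LinearEquiv.coe_coe, reflection_apply_of_polar_eq_zero hu hyu]
    exact ⟨hy, hyu⟩
  · rintro ⟨hx, hxu⟩
    exact ⟨hx, x, hx, reflection_apply_of_polar_eq_zero hu hxu⟩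

theorem finrank_inf_map_reflection_add_one [FiniteDimensional K W] {w : V} (hu : Q u ≠ 0)
    (huW : u ∉ W) (hw : w ∈ W) (hwu : polar Q u w ≠ 0) :
    finrank K (W ⊓ W.map (reflection hu).toLinearMap : Submodule K V) + 1 = finrank K W := by
  rw [inf_map_reflection hu huW]
  exact W.finrank_inf_ker_add_one hw hwu

end QuadraticMap

section Klein

variable {K : Type*} [Field K]

def kleinForm : QuadraticForm K (Fin 6 → K) :=
  QuadraticMap.proj 0 1 + QuadraticMap.proj 2 3 + QuadraticMap.proj 4 5

lemma kleinForm_apply (x : Fin 6 → K) : kleinForm x = kleinQ x := rfl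

lemma polar_kleinForm (x y : Fin 6 → K) : polar kleinForm x y = kleinB x y := rfl

lemma isExternal_iff_anisotropic {S : Submodule K (Fin 6 → K)} :
    IsExternal S ↔ (kleinForm.restrict S).Anisotropic := by
  refine ⟨fun h x hx => ?_, fun h s hs hs0 hQ => hs0 ?_⟩
  · by_contra hx0
    exact h x x.2 (by simpa using hx0) hx
  · simpa using h ⟨s, hs⟩ hQ

lemma kleinB_eq (x y : Fin 6 → K) :
    kleinB x y = x 0 * y 1 + x 1 * y 0 + x 2 * y 3 + x 3 * y 2 + x 4 * y 5 + x 5 * y 4 := by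
  simp only [kleinB, kleinQ, Pi.add_apply]
  ring

lemma kleinQ_add_smul_single {i : Fin 6} (hi : 2 ≤ i) (t : K) :
    kleinQ (![1, 1, 0, 0, 0, 0] + t • Pi.single i 1) = 1 := by
  fin_cases i <;> simp_all [kleinQ]

lemma eq_smul_of_kleinB_eq_zero {x : Fin 6 → K}
    (hsingle : ∀ i : Fin 6, 2 ≤ i → kleinB x (Pi.single i 1) = 0)
    (hv : kleinB x ![1, 1, 0, 0, 0, 0] = 0) : x = x 0 • ![1, -1, 0, 0, 0, 0] := by
  have h2 := hsingle 2 (by decide)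
  have h3 := hsingle 3 (by decide)
  have h4 := hsingle 4 (by decide)
  have h5 := hsingle 5 (by decide)
  simp only [kleinB_eq, ne_eq, Fin.reduceEq, not_false_eq_true, Pi.single_eq_of_ne, mul_zero,
    add_zero, Pi.single_eq_same, mul_one, zero_add, Matrix.cons_val_one, Matrix.cons_val_zero,
    Matrix.cons_val] at h2 h3 h4 h5 hv
  have h1 : x 1 = -x 0 := by linear_combination hv
  funext i
  fin_cases i <;> simp [*]

lemma exists_anisotropic_not_mem_not_mem_kleinPolar {c : K} (hc0 : c ≠ 0) (hc1 : c ≠ 1)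
    {W : Submodule K (Fin 6 → K)} (hW : IsExternal W) (hdim : 2 ≤ finrank K W) :
    ∃ u, kleinQ u ≠ 0 ∧ u ∉ W ∧ u ∉ kleinPolar W := by
  by_contra! hcover
  have hperp : ∀ i : Fin 6, 2 ≤ i →
      ![1, 1, 0, 0, 0, 0] ∈ kleinPolar W ∧ Pi.single i (1 : K) ∈ kleinPolar W := by
    intro i hi
    have hline : ∀ t : K, ![1, 1, 0, 0, 0, 0] + t • Pi.single i 1 ∈ W ∨
        ![1, 1, 0, 0, 0, 0] + t • Pi.single i 1 ∈ kleinPolar W := fun t =>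
      (em _).imp_right (hcover _ (by rw [kleinQ_add_smul_single hi]; exact one_ne_zero))
    refine (Submodule.mem_and_mem_of_add_smul_mem_or_mem hc0 hc1 hline).resolve_left ?_
    rintro ⟨-, hiW⟩
    exact hW _ hiW (by simp) (by fin_cases i <;> simp_all [kleinQ])
  have hle : W ≤ K ∙ ![1, -1, 0, 0, 0, 0] := fun x hx =>
    Submodule.mem_span_singleton.mpr ⟨x 0, (eq_smul_of_kleinB_eq_zero
      (fun i hi => (hperp i hi).2 x hx) ((hperp 2 (by decide)).1 x hx)).symm⟩
  have := Submodule.finrank_mono hle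
  rw [finrank_span_singleton (by simp)] at this
  omega

end Klein

/-- Lemma 4.9.
For every plane `ε₁` external to the Klein quadric there exists another external
plane `ε₂` meeting `ε₁` in a line. -/
theorem exists_second_external_plane {K : Type*} [Field K]
    (ε₁ : Submodule K (Fin 6 → K)) (hdim : Module.finrank K ε₁ = 3)
    (hext : IsExternal ε₁) :
    ∃ ε₂ : Submodule K (Fin 6 → K), Module.finrank K ε₂ = 3 ∧ IsExternal ε₂ ∧
      Module.finrank K (ε₁ ⊓ ε₂ : Submodule K (Fin 6 → K)) = 2 ∧ ε₁ ≠ ε₂ := by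
  obtain ⟨c, hc0, hc1⟩ : ∃ c : K, c ≠ 0 ∧ c ≠ 1 := by
    by_contra! hK
    exact not_anisotropic_of_finrank_eq_three hK _ hdim (isExternal_iff_anisotropic.mp hext)
  obtain ⟨u, hu, huε, huε'⟩ :=
    exists_anisotropic_not_mem_not_mem_kleinPolar hc0 hc1 hext (by omega)
  obtain ⟨w, hw, hwu⟩ : ∃ w ∈ ε₁, kleinB w u ≠ 0 := by
    by_contra! h
    exact huε' h
  have : FiniteDimensional K ε₁ := Module.finite_of_finrank_eq_succ hdim
  rw [← kleinForm_apply] at hu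
  have hinf := finrank_inf_map_reflection_add_one hu huε hw (by rwa [polar_comm, polar_kleinForm])
  refine ⟨ε₁.map (reflection hu).toLinearMap, ?_, ?_, by omega, fun h => ?_⟩
  · rw [LinearEquiv.finrank_map_eq, hdim]
  · exact isExternal_iff_anisotropic.mpr
      (anisotropic_restrict_map_reflection hu (isExternal_iff_anisotropic.mp hext))
  · rw [← h, inf_idem] at hinf
    omega
end
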